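/- arXiv:1910.03477 — 7 statements merged into one kernel-verified Lean document; each statement's English description precedes it below -/
import Mathlib

section
/- Let E be a real normed vector space, let A ⊆ E, and let Δx > 0. Let x₀, x₁, …, x_T be a finite sequence of points of E such that ‖x_{t+1} − x_t‖ ≤ Δx for all 0 ≤ t < T, with x₀ ∉ A and x_T ∉ A, and suppose x_{t̃} ∈ A for some 0 ≤ t̃ ≤ T. Then there exists 0 ≤ t ≤ T such that x_t ∈ A and infDist(x_t, frontier A) ≤ Δx; that is, the sequence contains at least one point of the Δx-shell A_{Δx} = {x ∈ A | infDist(x, frontier A) ≤ Δx}. -/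
open Set

lemma segment_meets_frontier {E : Type*} [NormedAddCommGroup E] [NormedSpace ℝ E]
    {A : Set E} {a b : E} (ha : a ∈ A) (hb : b ∉ A) :
    ∃ z ∈ frontier A, z ∈ segment ℝ a b := by
  by_contra h
  push_neg at h
  have hsub : segment ℝ a b ⊆ interior A ∪ (closure A)ᶜ := by
    intro z hz
    
    have : z ∉ frontier A := fun hf => h z hf hz
    rcases Classical.em (z ∈ closure A) with hc | hc
    · left
      rcases Classical.em (z ∈ interior A) with hi | hi
      · exact hi
      · exact absurd ⟨hc, hi⟩ this
    · exact Or.inr hc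
  have hpc : IsPreconnected (segment ℝ a b) := (convex_segment a b).isPreconnected
  have hA : a ∈ interior A := by
    have ha' : a ∈ closure A := subset_closure ha
    have : a ∉ frontier A := fun hf => h a hf (left_mem_segment ℝ a b)
    by_contra hi; exact this ⟨ha', hi⟩
  have hB : b ∉ closure A := by
    intro hc
    have : b ∉ frontier A := fun hf => h b hf (right_mem_segment ℝ a b)
    rcases Classical.em (b ∈ interior A) with hi | hi
    · exact hb (interior_subset hi)
    · exact this ⟨hc, hi⟩
  obtain ⟨z, _, hz1, hz2⟩ := hpc (interior A) (closure A)ᶜ isOpen_interior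
    (isClosed_closure.isOpen_compl) hsub
    ⟨a, left_mem_segment ℝ a b, hA⟩ ⟨b, right_mem_segment ℝ a b, hB⟩
  exact hz2 (interior_subset_closure hz1)

/-- **Δx-shell lemma (discrete time).** If a finite sequence of points in a real normed
vector space has consecutive steps of norm at most `Δx`, starts and ends outside the
unsafe set `A`, and visits `A`, then it contains a point of the Δx-shell
`{x ∈ A | infDist(x, frontier A) ≤ Δx}`. -/
theorem discrete_trajectory_meets_shell
    {E : Type*} [NormedAddCommGroup E] [NormedSpace ℝ E]
    (A : Set E) (Δx : ℝ) (hΔx : 0 < Δx)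
    (T : ℕ) (x : ℕ → E)
    (hstep : ∀ t < T, ‖x (t + 1) - x t‖ ≤ Δx)
    (hstart : x 0 ∉ A) (hend : x T ∉ A)
    (hmeet : ∃ tmid ≤ T, x tmid ∈ A) :
    ∃ t ≤ T, x t ∈ A ∧ Metric.infDist (x t) (frontier A) ≤ Δx := by
  classical
  obtain ⟨tmid, htmid, hxA⟩ := hmeet
  set P : ℕ → Prop := fun n => x n ∈ A with hP
  set t := Nat.findGreatest P T with ht
  have htT : t ≤ T := Nat.findGreatest_le T
  have htA : P t := Nat.findGreatest_spec htmid hxA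
  have htlt : t < T := lt_of_le_of_ne htT (fun h => hend (h ▸ htA))
  have hnext : x (t + 1) ∉ A := by
    intro hmem
    exact Nat.findGreatest_is_greatest (Nat.lt_succ_self t) (Nat.succ_le_of_lt htlt) hmem
  obtain ⟨z, hzf, hzs⟩ := segment_meets_frontier htA hnext
  refine ⟨t, htT, htA, ?_⟩
  have hd : dist (x t) z ≤ dist (x t) (x (t + 1)) := by
    have := dist_add_dist_of_mem_segment hzs
    nlinarith [dist_nonneg (x := z) (y := x (t + 1))]
  calc Metric.infDist (x t) (frontier A) ≤ dist (x t) z := Metric.infDist_le_dist_of_mem hzf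
    _ ≤ dist (x t) (x (t + 1)) := hd
    _ = ‖x (t + 1) - x t‖ := by rw [dist_eq_norm, norm_sub_rev]
    _ ≤ Δx := hstep t htlt
end

section
/- Let E be a real normed vector space and take X = E in the constraint-learning framework. Let A ⊆ E be the true unsafe set and Δx > 0. Suppose every unsafe trajectory ξ_k is the set of points of a finite sequence whose consecutive points are at distance at most Δx, whose first and last points lie outside A, and which contains at least one point of A. Define F_{Δx} = {θ ∈ Θ | every point of every safe demonstration lies in S(θ), and A_{Δx} ⊆ A(θ)}, where A_{Δx} = {x ∈ A | infDist(x, frontier A) ≤ Δx}. Then F_{Δx} ⊆ F, and consequently the guaranteed unsafe set satisfies G_¬s ⊆ ⋂_{θ ∈ F_{Δx}} A(θ). -/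
open Set

/-- A preconnected set meeting both `A` and `Aᶜ` meets `frontier A`. -/
lemma preconnected_inter_frontier
    {X : Type*} [TopologicalSpace X] {s A : Set X} (hs : IsPreconnected s)
    {a b : X} (ha : a ∈ s) (haA : a ∈ A) (hb : b ∈ s) (hbA : b ∉ A) :
    ∃ z ∈ s, z ∈ frontier A := by
  by_contra h
  push_neg at h
  have key : ∀ y ∈ s, y ∈ interior A ∨ y ∈ (closure A)ᶜ := by
    intro y hy
    by_cases hyA : y ∈ closure A
    · left
      by_contra hyi
      exact h y hy ⟨hyA, hyi⟩
    · right; exact hyA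
  have hsub : s ⊆ interior A ∪ (closure A)ᶜ := fun y hy => key y hy
  have haint : a ∈ interior A := by
    rcases key a ha with h' | h'
    · exact h'
    · exact absurd (subset_closure haA) h'
  have hbcl : b ∈ (closure A)ᶜ := by
    rcases key b hb with h' | h'
    · exact absurd (interior_subset h') hbA
    · exact h'
  rcases hs (interior A) (closure A)ᶜ isOpen_interior isClosed_closure.isOpen_compl hsub
    ⟨a, ha, haint⟩ ⟨b, hb, hbcl⟩ with ⟨z, _, hz1, hz2⟩
  exact hz2 (subset_closure (interior_subset hz1))

/-- **Discrete-time learnability for parametric constraints.** Suppose every unsafe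
trajectory is the set of points of a finite sequence with step size at most `Δx`,
endpoints outside the true unsafe set `A`, and at least one point inside `A`. Then the
feasible set `F_{Δx}` (demonstrations safe, Δx-shell of `A` unsafe) is contained in the
feasible set `F` of the constraint-recovery problem, and hence the guaranteed unsafe set
`G_¬s = ⋂_{θ ∈ F} A(θ)` is contained in `⋂_{θ ∈ F_{Δx}} A(θ)`. -/
theorem learnability_discrete_time
    {E : Type*} [NormedAddCommGroup E] [NormedSpace ℝ E]
    {Θ : Type*} (g : E → Θ → ℝ)
    (A : Set E) (Δx : ℝ) (hΔx : 0 < Δx)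
    (Ns Nu : ℕ) (demo : Fin Ns → Finset E) (traj : Fin Nu → Finset E)
    (htraj : ∀ k : Fin Nu, ∃ (T : ℕ) (x : ℕ → E),
      (↑(traj k) = {p : E | ∃ t ≤ T, x t = p}) ∧
      (∀ t < T, ‖x (t + 1) - x t‖ ≤ Δx) ∧
      x 0 ∉ A ∧ x T ∉ A ∧ ∃ tmid ≤ T, x tmid ∈ A)
    (F : Set Θ)
    (hF : F = {θ | (∀ j : Fin Ns, ∀ x ∈ demo j, 0 < g x θ) ∧
      (∀ k : Fin Nu, ∃ x ∈ traj k, g x θ ≤ 0)})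
    (FΔx : Set Θ)
    (hFΔx : FΔx = {θ | (∀ j : Fin Ns, ∀ x ∈ demo j, 0 < g x θ) ∧
      (∀ x ∈ {y ∈ A | Metric.infDist y (frontier A) ≤ Δx}, g x θ ≤ 0)}) :
    FΔx ⊆ F ∧
      (⋂ θ ∈ F, {x : E | g x θ ≤ 0}) ⊆ ⋂ θ ∈ FΔx, {x : E | g x θ ≤ 0} := by
  have hsub : FΔx ⊆ F := by
    intro θ hθ
    rw [hFΔx] at hθ
    obtain ⟨hdemo, hshell⟩ := hθ
    rw [hF]
    refine ⟨hdemo, fun k => ?_⟩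
    obtain ⟨T, x, hmem, hstep, h0, hT, tmid, htmid, hmid⟩ := htraj k
    -- find the first index in A
    have hex : ∃ t, x t ∈ A := ⟨tmid, hmid⟩
    classical
    have hxt' : x (Nat.find hex) ∈ A := Nat.find_spec hex
    have htle' : Nat.find hex ≤ tmid := Nat.find_min' hex hmid
    have ht0 : Nat.find hex ≠ 0 := by
      intro h; rw [h] at hxt'; exact h0 hxt'
    obtain ⟨s, hts⟩ := Nat.exists_eq_succ_of_ne_zero ht0
    rw [hts] at hxt' htle'
    have hxt : x (s + 1) ∈ A := hxt'
    have htle : s + 1 ≤ tmid := htle'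
    have hxs : x s ∉ A := by
      have := Nat.find_min hex (m := s) (by omega)
      exact this
    have hsT : s < T := lt_of_lt_of_le (Nat.lt_succ_self s) (le_trans htle htmid)
    -- the segment from x s to x (s+1) meets the frontier
    obtain ⟨z, hzseg, hzf⟩ := preconnected_inter_frontier
      ((convex_segment (x s) (x (s + 1))).isPreconnected)
      (right_mem_segment ℝ (x s) (x (s + 1))) hxt
      (left_mem_segment ℝ (x s) (x (s + 1))) hxs
    have hdist : Metric.infDist (x (s + 1)) (frontier A) ≤ Δx := by
      have h1 : Metric.infDist (x (s + 1)) (frontier A) ≤ dist (x (s + 1)) z :=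
        Metric.infDist_le_dist_of_mem hzf
      have h2 : dist (x (s + 1)) z ≤ dist (x s) (x (s + 1)) := by
        have := dist_add_dist_of_mem_segment hzseg
        have h3 : dist z (x (s + 1)) ≤ dist (x s) (x (s + 1)) := by linarith [dist_nonneg (x := x s) (y := z)]
        rwa [dist_comm] at h3
      calc Metric.infDist (x (s + 1)) (frontier A) ≤ dist (x s) (x (s + 1)) := h1.trans h2
        _ = ‖x (s + 1) - x s‖ := by rw [dist_eq_norm, norm_sub_rev]
        _ ≤ Δx := hstep s hsT
    refine ⟨x (s + 1), ?_, hshell _ ⟨hxt, hdist⟩⟩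
    have : x (s + 1) ∈ (↑(traj k) : Set E) := by
      rw [hmem]; exact ⟨s + 1, le_trans htle htmid, rfl⟩
    exact_mod_cast this
  refine ⟨hsub, fun p hp => ?_⟩
  simp only [mem_iInter] at hp ⊢
  exact fun θ hθ => hp θ (hsub hθ)
end

section
/- Let X be a topological space and A ⊆ X. In the constraint-learning framework, suppose each unsafe trajectory is given by a continuous curve ξ_k : [0,1] → X with ξ_k(0) ∉ A and ξ_k(1) ∉ A and with ξ_k(t̃) ∈ A for some t̃ ∈ [0,1], and the feasible set is F = {θ ∈ Θ | every point of every safe demonstration lies in S(θ), and for each k there exists t ∈ [0,1] with ξ_k(t) ∈ A(θ)}. Define F_{∂A} = {θ ∈ Θ | every point of every safe demonstration lies in S(θ), and frontier A ⊆ A(θ)}. Then F_{∂A} ⊆ F, and consequently ⋂_{θ ∈ F} A(θ) ⊆ ⋂_{θ ∈ F_{∂A}} A(θ). -/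
lemma curve_meets_frontier {X : Type*} [TopologicalSpace X] (A : Set X) (f : ℝ → X)
    (hc : ContinuousOn f (Set.Icc (0:ℝ) 1)) (h0 : f 0 ∉ A) (hm : ∃ t ∈ Set.Icc (0:ℝ) 1, f t ∈ A) :
    ∃ t ∈ Set.Icc (0:ℝ) 1, f t ∈ frontier A := by
  by_contra h
  push_neg at h
  have hp : IsPreconnected (f '' Set.Icc (0:ℝ) 1) := (isPreconnected_Icc).image f hc
  obtain ⟨tm, htm, htmA⟩ := hm
  have hdisj : (f '' Set.Icc (0:ℝ) 1 ∩ (interior A ∩ (closure A)ᶜ)).Nonempty := by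
    apply hp (interior A) (closure A)ᶜ isOpen_interior (isOpen_compl_iff.mpr isClosed_closure)
    · rintro x ⟨t, ht, rfl⟩
      by_cases hx : f t ∈ closure A
      · left
        have hnf := h t ht
        rw [frontier, Set.mem_diff] at hnf
        push_neg at hnf
        exact hnf hx
      · right; exact hx
    · exact ⟨f tm, Set.mem_image_of_mem f htm, by
        have := h tm htm
        have hcl : f tm ∈ closure A := subset_closure htmA
        rw [frontier, Set.mem_diff] at this
        push_neg at this
        exact this hcl⟩
    · refine ⟨f 0, Set.mem_image_of_mem f ⟨le_refl 0, zero_le_one⟩, fun hcl => ?_⟩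
      have := h 0 ⟨le_refl 0, zero_le_one⟩
      rw [frontier, Set.mem_diff] at this
      push_neg at this
      exact h0 (interior_subset (this hcl))
  obtain ⟨x, _, hxi, hxc⟩ := hdisj
  exact hxc (subset_closure (interior_subset hxi))

/-- **Continuous-time learnability for parametric constraints.** If each unsafe
trajectory is a continuous curve on `[0,1]` with endpoints outside the true unsafe set
`A` that meets `A`, then the feasible set `F_{∂A}` (demonstrations safe, frontier of `A`
unsafe) is contained in the feasible set `F`, and hence
`⋂_{θ ∈ F} A(θ) ⊆ ⋂_{θ ∈ F_{∂A}} A(θ)`. -/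
theorem learnability_continuous_time
    {X : Type*} [TopologicalSpace X]
    {Θ : Type*} (g : X → Θ → ℝ)
    (A : Set X)
    (Ns Nu : ℕ) (demo : Fin Ns → Finset X) (ξ : Fin Nu → ℝ → X)
    (hcont : ∀ k : Fin Nu, ContinuousOn (ξ k) (Set.Icc (0 : ℝ) 1))
    (hstart : ∀ k : Fin Nu, ξ k 0 ∉ A)
    (hend : ∀ k : Fin Nu, ξ k 1 ∉ A)
    (hmeet : ∀ k : Fin Nu, ∃ tmid ∈ Set.Icc (0 : ℝ) 1, ξ k tmid ∈ A)
    (F : Set Θ)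
    (hF : F = {θ | (∀ j : Fin Ns, ∀ x ∈ demo j, 0 < g x θ) ∧
      (∀ k : Fin Nu, ∃ t ∈ Set.Icc (0 : ℝ) 1, g (ξ k t) θ ≤ 0)})
    (FbdA : Set Θ)
    (hFbdA : FbdA = {θ | (∀ j : Fin Ns, ∀ x ∈ demo j, 0 < g x θ) ∧
      (∀ x ∈ frontier A, g x θ ≤ 0)}) :
    FbdA ⊆ F ∧
      (⋂ θ ∈ F, {x : X | g x θ ≤ 0}) ⊆ ⋂ θ ∈ FbdA, {x : X | g x θ ≤ 0} := by
  have hsub : FbdA ⊆ F := by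
    intro θ hθ
    rw [hFbdA] at hθ
    rw [hF]
    refine ⟨hθ.1, fun k => ?_⟩
    obtain ⟨t, ht, htf⟩ := curve_meets_frontier A (ξ k) (hcont k) (hstart k) (hmeet k)
    exact ⟨t, ht, hθ.2 _ htf⟩
  exact ⟨hsub, fun x hx => Set.mem_iInter₂.mpr fun θ hθ =>
    Set.mem_iInter₂.mp hx θ (hsub hθ)⟩
end

section
/- In the constraint-learning framework with X = ℝ^n and polytopic parameterization A(θ) = {x ∈ ℝ^n | H(θ)x ≤ h(θ)} (componentwise, with H(θ) an m × n real matrix and h(θ) ∈ ℝ^m), suppose M ∈ ℝ satisfies, for every θ ∈ Θ, every index j, and every point x appearing in a safe demonstration or an unsafe trajectory: M > h(θ)_j − (H(θ)x)_j and M ≥ (H(θ)x)_j − h(θ)_j. Define F_M as the set of θ ∈ Θ such that: for each safe-demonstration point x there exists b^x : Fin m → {0,1} with Σ_j b^x_j ≥ 1 and (H(θ)x)_j > h(θ)_j − M(1 − b^x_j) for all j; and for each unsafe trajectory with points x_1, …, x_{T_k} there exist b_1, …, b_{T_k} ∈ {0,1} with Σ_i b_i ≥ 1 and H(θ)x_i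 ≤ h(θ) + M(1 − b_i)·𝟙 for all i. Then F_M = F. Consequently, if some θ* ∈ Θ satisfies that every safe-demonstration point lies in S(θ*) and every unsafe trajectory contains a point of A(θ*), then ⋂_{θ ∈ F_M} A(θ) ⊆ A(θ*) and ⋂_{θ ∈ F_M} S(θ) ⊆ S(θ*). -/
private lemma exists_one_of_binary {N : ℕ} (b : Fin N → ℝ)
    (hb : ∀ i, b i = 0 ∨ b i = 1) (hs : 1 ≤ ∑ i, b i) : ∃ i, b i = 1 := by
  by_contra hc
  push_neg at hc
  have : ∀ i, b i = 0 := fun i => (hb i).resolve_right (hc i)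
  simp [this] at hs
  linarith


/-- **Conservativeness of the mixed-integer polytopic constraint recovery problem.**
With a polytopic parameterization `A(θ) = {x | H(θ)x ≤ h(θ)}` and a big-M constant `M`
valid for every parameter and every data point, the feasible set `F_M` of the big-M
mixed-integer program equals the feasible set `F` of the exact constraint-recovery
problem. Consequently, if some `θ*` is consistent with the data, the guaranteed unsafe
set `⋂_{θ ∈ F_M} A(θ)` is contained in `A(θ*)` and the guaranteed safe set
`⋂_{θ ∈ F_M} S(θ)` is contained in `S(θ*)`. -/
theorem bigM_polytopic_constraint_recovery_conservative
    {Θ : Type*} {m n : ℕ}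
    (H : Θ → Matrix (Fin m) (Fin n) ℝ) (h : Θ → Fin m → ℝ)
    (Ns Nu : ℕ) (demo : Fin Ns → Finset (Fin n → ℝ))
    (T : Fin Nu → ℕ) (traj : (k : Fin Nu) → Fin (T k) → (Fin n → ℝ))
    (M : ℝ)
    (hMdemo : ∀ (θ : Θ) (j : Fin m), ∀ i : Fin Ns, ∀ x ∈ demo i,
      h θ j - (H θ).mulVec x j < M ∧ (H θ).mulVec x j - h θ j ≤ M)
    (hMtraj : ∀ (θ : Θ) (j : Fin m) (k : Fin Nu) (i : Fin (T k)),
      h θ j - (H θ).mulVec (traj k i) j < M ∧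
        (H θ).mulVec (traj k i) j - h θ j ≤ M)
    (F : Set Θ)
    (hF : F = {θ | (∀ i : Fin Ns, ∀ x ∈ demo i, ∃ j : Fin m,
        h θ j < (H θ).mulVec x j) ∧
      (∀ k : Fin Nu, ∃ i : Fin (T k), ∀ j : Fin m,
        (H θ).mulVec (traj k i) j ≤ h θ j)})
    (FM : Set Θ)
    (hFM : FM = {θ |
      (∀ i : Fin Ns, ∀ x ∈ demo i, ∃ b : Fin m → ℝ,
        (∀ j, b j = 0 ∨ b j = 1) ∧ 1 ≤ ∑ j, b j ∧
        ∀ j : Fin m, h θ j - M * (1 - b j) < (H θ).mulVec x j) ∧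
      (∀ k : Fin Nu, ∃ b : Fin (T k) → ℝ,
        (∀ i, b i = 0 ∨ b i = 1) ∧ 1 ≤ ∑ i, b i ∧
        ∀ (i : Fin (T k)) (j : Fin m),
          (H θ).mulVec (traj k i) j ≤ h θ j + M * (1 - b i))}) :
    FM = F ∧
      ∀ θstar : Θ,
        (∀ i : Fin Ns, ∀ x ∈ demo i, ∃ j : Fin m, h θstar j < (H θstar).mulVec x j) →
        (∀ k : Fin Nu, ∃ i : Fin (T k), ∀ j : Fin m,
          (H θstar).mulVec (traj k i) j ≤ h θstar j) →
        (⋂ θ ∈ FM, {x : Fin n → ℝ | ∀ j, (H θ).mulVec x j ≤ h θ j}) ⊆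
            {x : Fin n → ℝ | ∀ j, (H θstar).mulVec x j ≤ h θstar j} ∧
          (⋂ θ ∈ FM, {x : Fin n → ℝ | ∃ j, h θ j < (H θ).mulVec x j}) ⊆
            {x : Fin n → ℝ | ∃ j, h θstar j < (H θstar).mulVec x j} := by

  have key : FM = F := by
    ext θ
    rw [hF, hFM]
    constructor
    · rintro ⟨hd, ht⟩
      constructor
      · intro i x hx
        obtain ⟨b, hb, hs, hlt⟩ := hd i x hx
        obtain ⟨j, hj⟩ := exists_one_of_binary b hb hs
        exact ⟨j, by have := hlt j; rw [hj] at this; simpa using this⟩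
      · intro k
        obtain ⟨b, hb, hs, hle⟩ := ht k
        obtain ⟨i, hi⟩ := exists_one_of_binary b hb hs
        exact ⟨i, fun j => by have := hle i j; rw [hi] at this; simpa using this⟩
    · rintro ⟨hd, ht⟩
      constructor
      · intro i x hx
        obtain ⟨j, hj⟩ := hd i x hx
        refine ⟨fun j' => if j' = j then 1 else 0, fun j' => by by_cases hjj : j' = j <;> simp [hjj],
          by simp, fun j' => ?_⟩
        by_cases hjj : j' = j
        · subst hjj; simpa using hj
        · have := (hMdemo θ j' i x hx).1
          simp only [if_neg hjj]
          linarith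
      · intro k
        obtain ⟨i, hi⟩ := ht k
        refine ⟨fun i' => if i' = i then 1 else 0, fun i' => by by_cases hii : i' = i <;> simp [hii],
          by simp, fun i' j => ?_⟩
        by_cases hii : i' = i
        · subst hii; simpa using hi j
        · have := (hMtraj θ j k i').2
          simp only [if_neg hii]
          linarith
  refine ⟨key, fun θstar hsafe hunsafe => ?_⟩
  have hmem : θstar ∈ FM := by rw [key, hF]; exact ⟨hsafe, hunsafe⟩
  constructor
  · intro x hx
    exact Set.mem_iInter₂.mp hx θstar hmem
  · intro x hx
    exact Set.mem_iInter₂.mp hx θstar hmem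
end

section
/- Let X be a set, Θ_s a set of simple-set parameters, and g_s : X → Θ_s → ℝ a simple parameterization; for a tuple θ = (θ_1, …, θ_N) ∈ Θ_s^N define A_N(θ) = ⋃_{i=1}^N {x ∈ X | g_s(x, θ_i) ≤ 0}. Let the data be finitely many safe demonstrations and finitely many unsafe trajectories, each a finite set of points of X, and for each N let F_N = {θ ∈ Θ_s^N | for every point x of every safe demonstration and every i, g_s(x, θ_i) > 0, and every unsafe trajectory contains at least one point of A_N(θ)}. Suppose: (a) the true unsafe set is A = A_{N*}(θ*) for some θ* ∈ Θ_s^{N*}; (b) every point of every safe demonstration lies in A^c; (c) every unsafe trajectory contains at least one point of A; (d) there exists θ_∅ ∈ Θ_s with {x ∈ X | g_s(x, θ_∅) ≤ 0} = ∅. Then for every N̄ ≥ N*, the over-parameterized guaranteed sets are conservative: ⋂_{θ ∈ F_{N̄}} A_{N̄}(θ) ⊆ A and ⋂_{θ ∈ F_{N̄}} (A_{N̄}(θ))^c ⊆ A^c. -/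
/-- **Conservativeness under over-parameterization.** Suppose the true unsafe set `A` is
a union of `N*` simple sets, all demonstration points lie in `Aᶜ`, every unsafe
trajectory meets `A`, and the simple parameterization can express the empty set. Then
for every `N̄ ≥ N*`, the guaranteed unsafe and safe sets obtained with `N̄` simple sets
are conservative: `⋂_{θ ∈ F_{N̄}} A_{N̄}(θ) ⊆ A` and `⋂_{θ ∈ F_{N̄}} A_{N̄}(θ)ᶜ ⊆ Aᶜ`. -/
theorem conservativeness_over_parameterization
    {X Θs : Type*} (gs : X → Θs → ℝ)
    (Ns Nu : ℕ) (demo : Fin Ns → Finset X) (traj : Fin Nu → Finset X)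
    (A : Set X) (Nstar : ℕ) (θstar : Fin Nstar → Θs)
    (hA : A = ⋃ i : Fin Nstar, {x : X | gs x (θstar i) ≤ 0})
    (hdemo : ∀ j : Fin Ns, ∀ x ∈ demo j, x ∈ Aᶜ)
    (htraj : ∀ k : Fin Nu, ∃ x ∈ traj k, x ∈ A)
    (hempty : ∃ θe : Θs, {x : X | gs x θe ≤ 0} = ∅) :
    ∀ Nbar : ℕ, Nstar ≤ Nbar →
      (⋂ (θ : Fin Nbar → Θs)
          (_ : (∀ j : Fin Ns, ∀ x ∈ demo j, ∀ i : Fin Nbar, 0 < gs x (θ i)) ∧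
            (∀ k : Fin Nu, ∃ x ∈ traj k, ∃ i : Fin Nbar, gs x (θ i) ≤ 0)),
          ⋃ i : Fin Nbar, {x : X | gs x (θ i) ≤ 0}) ⊆ A ∧
      (⋂ (θ : Fin Nbar → Θs)
          (_ : (∀ j : Fin Ns, ∀ x ∈ demo j, ∀ i : Fin Nbar, 0 < gs x (θ i)) ∧
            (∀ k : Fin Nu, ∃ x ∈ traj k, ∃ i : Fin Nbar, gs x (θ i) ≤ 0)),
          (⋃ i : Fin Nbar, {x : X | gs x (θ i) ≤ 0})ᶜ) ⊆ Aᶜ := by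
  intro Nbar hle
  obtain ⟨θe, hθe⟩ := hempty
  set θ' : Fin Nbar → Θs := fun i =>
    if h : (i : ℕ) < Nstar then θstar ⟨i, h⟩ else θe with hθ'
  have hunion : (⋃ i : Fin Nbar, {x : X | gs x (θ' i) ≤ 0}) = A := by
    rw [hA]
    apply Set.Subset.antisymm
    · intro x hx
      obtain ⟨i, hi⟩ := Set.mem_iUnion.mp hx
      by_cases h : (i : ℕ) < Nstar
      · exact Set.mem_iUnion.mpr ⟨⟨i, h⟩, by simpa [θ', h] using hi⟩
      · exfalso
        have : x ∈ ({x : X | gs x θe ≤ 0} : Set X) := by simpa [θ', h] using hi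
        simp [hθe] at this
    · intro x hx
      obtain ⟨i, hi⟩ := Set.mem_iUnion.mp hx
      have h : (i : ℕ) < Nbar := lt_of_lt_of_le i.isLt hle
      refine Set.mem_iUnion.mpr ⟨⟨i, h⟩, ?_⟩
      simpa [θ', i.isLt] using hi
  have hfeas : (∀ j : Fin Ns, ∀ x ∈ demo j, ∀ i : Fin Nbar, 0 < gs x (θ' i)) ∧
      (∀ k : Fin Nu, ∃ x ∈ traj k, ∃ i : Fin Nbar, gs x (θ' i) ≤ 0) := by
    constructor
    · intro j x hx i
      by_contra hneg
      push_neg at hneg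
      have : x ∈ (⋃ i : Fin Nbar, {x : X | gs x (θ' i) ≤ 0}) :=
        Set.mem_iUnion.mpr ⟨i, hneg⟩
      rw [hunion] at this
      exact hdemo j x hx this
    · intro k
      obtain ⟨x, hxk, hxA⟩ := htraj k
      rw [← hunion] at hxA
      obtain ⟨i, hi⟩ := Set.mem_iUnion.mp hxA
      exact ⟨x, hxk, i, hi⟩
  constructor
  · intro x hx
    have := Set.mem_iInter.mp hx θ'
    have := Set.mem_iInter.mp this hfeas
    rwa [hunion] at this
  · intro x hx
    have := Set.mem_iInter.mp hx θ'
    have := Set.mem_iInter.mp this hfeas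
    rwa [hunion] at this
end

section
/- In ℝ², consider the axis-aligned box parameterization with parameters θ = (l, u) ∈ ℝ² × ℝ² and unsafe set Box(l, u) = {x ∈ ℝ² | l₁ ≤ x₁ ≤ u₁ and l₂ ≤ x₂ ≤ u₂}. Let the true unsafe set be the union of two axis-aligned boxes A = ([0,1] × [0,3]) ∪ ([0,3] × [0,1]), let there be no safe demonstrations, and let the unsafe trajectories be the two singletons {(1/2, 5/2)} and {(5/2, 1/2)} (each of which contains a point of A). Then the single-box feasible set F = {(l, u) | (1/2, 5/2) ∈ Box(l, u) and (5/2, 1/2) ∈ Box(l, u)} is nonempty, the point (5/2, 5/2) belongs to the guaranteed unsafe set G_¬s = ⋂_{(l,u) ∈ F} Box(l, u), yet (5/2, 5/2) ∉ A. Hence, when the parameterization is under-parameterized (one box instead of two), the guaranteed unsafe set G_¬s is not contained in the true unsafe set A. -/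
/-- **Non-conservativeness under under-parameterization (counterexample).** With a
single axis-aligned box parameterization in ℝ², true unsafe set
`A = ([0,1] × [0,3]) ∪ ([0,3] × [0,1])`, no safe demonstrations, and unsafe trajectories
`{(1/2, 5/2)}` and `{(5/2, 1/2)}` (each containing a point of `A`), the feasible set `F`
is nonempty and the point `(5/2, 5/2)` lies in the guaranteed unsafe set
`G_¬s = ⋂_{(l,u) ∈ F} Box(l,u)` even though it is not in `A`. -/
theorem under_parameterization_not_conservative
    (Box : (ℝ × ℝ) → (ℝ × ℝ) → Set (ℝ × ℝ))
    (hBox : ∀ l u : ℝ × ℝ, Box l u =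
      {x : ℝ × ℝ | l.1 ≤ x.1 ∧ x.1 ≤ u.1 ∧ l.2 ≤ x.2 ∧ x.2 ≤ u.2})
    (A : Set (ℝ × ℝ))
    (hA : A = (Set.Icc (0:ℝ) 1 ×ˢ Set.Icc (0:ℝ) 3) ∪
      (Set.Icc (0:ℝ) 3 ×ˢ Set.Icc (0:ℝ) 1))
    (F : Set ((ℝ × ℝ) × (ℝ × ℝ)))
    (hF : F = {p | ((1/2 : ℝ), (5/2 : ℝ)) ∈ Box p.1 p.2 ∧
      ((5/2 : ℝ), (1/2 : ℝ)) ∈ Box p.1 p.2}) :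
    ((1/2 : ℝ), (5/2 : ℝ)) ∈ A ∧ ((5/2 : ℝ), (1/2 : ℝ)) ∈ A ∧
      F.Nonempty ∧
      ((5/2 : ℝ), (5/2 : ℝ)) ∈ ⋂ p ∈ F, Box p.1 p.2 ∧
      ((5/2 : ℝ), (5/2 : ℝ)) ∉ A := by
  subst hA hF
  simp only [hBox]
  refine ⟨Or.inl ⟨⟨by norm_num, by norm_num⟩, ⟨by norm_num, by norm_num⟩⟩,
    Or.inr ⟨⟨by norm_num, by norm_num⟩, ⟨by norm_num, by norm_num⟩⟩,
    ⟨((0,0),(3,3)), by norm_num⟩, ?_, ?_⟩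
  · refine Set.mem_iInter₂.2 fun p hp => ?_
    obtain ⟨⟨h1, h2, h3, h4⟩, ⟨h5, h6, h7, h8⟩⟩ := hp
    exact ⟨by linarith, by linarith, by linarith, by linarith⟩
  · rintro (⟨⟨_, h⟩, _⟩ | ⟨_, _, h⟩) <;> norm_num at h
end

section
/- Let X be a metric space in the constraint-learning framework, let k ∈ X, and let ε > 0. Suppose that for every feasible parameter θ ∈ F and every safe point x ∈ S(θ), dist(k, x) ≥ ε. Then for every ε̂ with 0 ≤ ε̂ < ε, the closed ball {k' ∈ X | dist(k, k') ≤ ε̂} is contained in the guaranteed unsafe set G_¬s = ⋂_{θ ∈ F} A(θ); that is, every ball around the query point of radius strictly smaller than the optimal value of the volume-extraction problem consists of guaranteed unsafe states. -/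
/-- **Volume extraction yields guaranteed unsafe balls.** In a metric constraint space,
if every safe point of every feasible parameter is at distance at least `ε` from the
query point `k` (i.e. the optimal value of the volume-extraction problem at `k` is at
least `ε`), then every closed ball around `k` of radius `ε̂ < ε` is contained in the
guaranteed unsafe set `G_¬s = ⋂_{θ ∈ F} A(θ)`. -/
theorem volume_extraction_ball_guaranteed_unsafe
    {X : Type*} [MetricSpace X] {Θ : Type*} (g : X → Θ → ℝ)
    (Ns Nu : ℕ) (demo : Fin Ns → Finset X) (traj : Fin Nu → Finset X)
    (F : Set Θ)
    (hF : F = {θ | (∀ j : Fin Ns, ∀ x ∈ demo j, 0 < g x θ) ∧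
      (∀ k' : Fin Nu, ∃ x ∈ traj k', g x θ ≤ 0)})
    (k : X) (ε : ℝ) (hε : 0 < ε)
    (hfar : ∀ θ ∈ F, ∀ x : X, 0 < g x θ → ε ≤ dist k x) :
    ∀ εhat : ℝ, 0 ≤ εhat → εhat < ε →
      {k' : X | dist k k' ≤ εhat} ⊆ ⋂ θ ∈ F, {x : X | g x θ ≤ 0} := by
  intro εhat _ hlt k' hk'
  simp only [Set.mem_iInter, Set.mem_setOf_eq] at *
  intro θ hθ
  by_contra h
  exact absurd (hfar θ hθ k' (lt_of_not_ge h)) (not_le.2 (lt_of_le_of_lt hk' hlt))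
end
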